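/- If the one-circle region Δ(I) of an interval I = (a,b) contains a real root z of a square-free real polynomial P whose separation σ(z,P) exceeds 2(b-a), then var(P,I) = 1. -/

import Mathlib

/-
Write P = (X - z) Q. The transform P ↦ P_I is multiplicative, and the factor X - z becomes
(a - z) X + (b - z), whose two coefficients have opposite signs because z ∈ I. Every other root
w of P is more than 2(b - a) away from z, hence outside Obreshkoff's two-circle region of I, so
every real irreducible factor of Q is transformed into c (α X² + β X + γ) with α, β, γ ≥ 0 and
α γ ≤ β² (its roots lie in the sector |arg x| ≥ 2π/3). Multiplication by such a polynomial
preserves a coefficient sequence with a single sign change, so the coefficients of P_I change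
sign exactly once.
-/

open Polynomial Finset

open Classical in
/-- Number of sign variations in the coefficient sequence (f 0, ..., f N). -/
noncomputable def signVar (f : ℕ → ℝ) (N : ℕ) : ℕ :=
  ((Finset.range (N+1) ×ˢ Finset.range (N+1)).filter
    (fun q => q.1 < q.2 ∧ f q.1 * f q.2 < 0 ∧ ∀ l ∈ Finset.Ioo q.1 q.2, f l = 0)).card

/-- The Möbius-transformed polynomial P_I(x) = (x+1)^n · P((ax+b)/(x+1)). -/
noncomputable def mobius (P : Polynomial ℝ) (n : ℕ) (a b : ℝ) : Polynomial ℝ :=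
  ∑ i ∈ Finset.range (n+1),
    Polynomial.C (P.coeff i) * (Polynomial.C a * Polynomial.X + Polynomial.C b)^i *
      (Polynomial.X + 1)^(n-i)

/-- var(P,(a,b)) = number of sign variations in the coefficient sequence of P_I. -/
noncomputable def var (P : Polynomial ℝ) (n : ℕ) (a b : ℝ) : ℕ :=
  signVar (fun i => (mobius P n a b).coeff i) n

section Mobius

variable (a b : ℝ)

theorem eval_mobius {P : ℝ[X]} {n : ℕ} (hP : P.natDegree ≤ n) {x : ℝ} (hx : x + 1 ≠ 0) :
    (mobius P n a b).eval x = (x + 1) ^ n * P.eval ((a * x + b) / (x + 1)) := by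
  simp only [mobius, eval_finsetSum, eval_mul, eval_C, eval_pow, eval_add, eval_X, eval_one]
  rw [eval_eq_sum_range' (Nat.lt_succ_of_le hP), mul_sum]
  refine sum_congr rfl fun i hi => ?_
  rw [← pow_mul_pow_sub (x + 1) (Nat.le_of_lt_succ (mem_range.1 hi)), div_pow]
  field_simp

theorem mobius_mul {P Q : ℝ[X]} {m k : ℕ} (hP : P.natDegree ≤ m) (hQ : Q.natDegree ≤ k) :
    mobius (P * Q) (m + k) a b = mobius P m a b * mobius Q k a b := by
  refine eq_of_infinite_eval_eq _ _ ((Set.finite_singleton (-1)).infinite_compl.mono ?_)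
  intro x (hx : x ≠ -1)
  have hx : x + 1 ≠ 0 := fun h => hx (by linarith)
  rw [Set.mem_ofPred_eq, eval_mul, eval_mobius a b hP hx, eval_mobius a b hQ hx,
    eval_mobius a b (natDegree_mul_le.trans (add_le_add hP hQ)) hx, eval_mul]
  ring

theorem natDegree_mobius_le (P : ℝ[X]) (n : ℕ) : (mobius P n a b).natDegree ≤ n := by
  refine natDegree_sum_le_of_forall_le _ _ fun i hi => ?_
  have hi : i ≤ n := Nat.le_of_lt_succ (mem_range.1 hi)
  calc _ ≤ i + (n - i) := by compute_degree
    _ = n := by omega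

theorem mobius_C (c : ℝ) : mobius (C c) 0 a b = C c := by
  simp [mobius]

theorem mobius_C_mul (c : ℝ) (P : ℝ[X]) (n : ℕ) :
    mobius (C c * P) n a b = C c * mobius P n a b := by
  rw [mobius, mobius, mul_sum]
  refine sum_congr rfl fun i _ => ?_
  rw [coeff_C_mul, C_mul]
  ring

theorem mobius_one_eq (p : ℝ[X]) :
    mobius p 1 a b = C (p.coeff 0) * (X + 1) + C (p.coeff 1) * (C a * X + C b) := by
  simp [mobius, sum_range_succ]

theorem mobius_two_eq (p : ℝ[X]) :
    mobius p 2 a b = C (p.coeff 0) * (X + 1) ^ 2 + C (p.coeff 1) * (C a * X + C b) * (X + 1)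
      + C (p.coeff 2) * (C a * X + C b) ^ 2 := by
  simp [mobius, sum_range_succ]

theorem mobius_X_sub_C (r : ℝ) : mobius (X - C r) 1 a b = C (a - r) * X + C (b - r) := by
  rw [mobius_one_eq]
  simp only [coeff_sub, coeff_X_zero, coeff_C_zero, coeff_X_one, coeff_C_succ, map_sub,
    map_zero, map_one]
  ring

end Mobius

def NonnegThenNonpos (f : ℕ → ℝ) : Prop :=
  ∃ t, (∀ k ≤ t, 0 ≤ f k) ∧ ∀ k, t < k → f k ≤ 0

def AtMostOneSignChange (g : ℝ[X]) : Prop :=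
  NonnegThenNonpos g.coeff ∨ NonnegThenNonpos (-g).coeff

/-- The two coefficients of `(α X² + β X + γ) * g` around the sign change of `g`: once one is
negative, the next is not positive. This is where `α γ ≤ β²` enters, i.e. that the roots of the
quadratic lie in the sector `|arg x| ≥ 2π/3`. -/
theorem sector_coeff_step {α β γ u v w x : ℝ} (hα : 0 ≤ α) (hβ : 0 ≤ β) (hγ : 0 ≤ γ)
    (hαγ : α * γ ≤ β ^ 2) (hu : 0 ≤ u) (hw : w ≤ 0) (hx : x ≤ 0)
    (h : α * u + β * v + γ * w < 0) : α * v + β * w + γ * x ≤ 0 := by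
  rcases hα.eq_or_lt with rfl | hα
  · nlinarith
  · by_contra! h'
    nlinarith [mul_nonneg hβ h'.le, mul_pos hα (neg_pos.2 h), mul_nonneg hβ hγ,
      mul_nonneg (sub_nonneg.2 hαγ) (neg_nonneg.2 hw), mul_nonneg hα.le hu]

theorem NonnegThenNonpos.quadratic_mul {α β γ : ℝ} (hα : 0 ≤ α) (hβ : 0 ≤ β) (hγ : 0 ≤ γ)
    (hαγ : α * γ ≤ β ^ 2) {g : ℝ[X]} (hg : NonnegThenNonpos g.coeff) :
    NonnegThenNonpos ((C α * X ^ 2 + C β * X + C γ) * g).coeff := by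
  obtain ⟨t, hpos, hneg⟩ := hg
  set h := (C α * X ^ 2 + C β * X + C γ) * g
  have hXpos : ∀ k ≤ t + 1, 0 ≤ (X * g).coeff k := by
    rintro (_ | k) hk
    · simp
    · rw [coeff_X_mul]; exact hpos k (by omega)
  have hXneg : ∀ k, t + 1 < k → (X * g).coeff k ≤ 0 := by
    rintro (_ | k) hk
    · omega
    · rw [coeff_X_mul]; exact hneg k (by omega)
  have hcoeff : ∀ k, h.coeff (k + 1) =
      α * (X * g).coeff k + β * g.coeff k + γ * g.coeff (k + 1) := by
    intro k
    simp only [h, add_mul, coeff_add, mul_assoc, coeff_C_mul, pow_two, coeff_X_mul]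
  have hlow : ∀ k ≤ t, 0 ≤ h.coeff k := by
    rintro (_ | k) hk
    · simpa [h, mul_coeff_zero] using mul_nonneg hγ (hpos 0 (Nat.zero_le t))
    · rw [hcoeff]
      have := hXpos k (by omega)
      have := hpos k (by omega)
      have := hpos (k + 1) hk
      positivity
  have hhigh : ∀ k, t + 2 < k → h.coeff k ≤ 0 := by
    rintro (_ | k) hk
    · omega
    · rw [hcoeff]
      have := hXneg k (by omega)
      have := hneg k (by omega)
      have := hneg (k + 1) (by omega)
      nlinarith
  have hmid : h.coeff (t + 1) < 0 → h.coeff (t + 2) ≤ 0 := by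
    rw [hcoeff, hcoeff, coeff_X_mul]
    exact sector_coeff_step hα hβ hγ hαγ (hXpos t (by omega)) (hneg (t + 1) (by omega))
      (hneg (t + 2) (by omega))
  have hcases : ∀ k, k ≤ t ∨ k = t + 1 ∨ k = t + 2 ∨ t + 2 < k := by omega
  by_cases h1 : 0 ≤ h.coeff (t + 1)
  · by_cases h2 : 0 ≤ h.coeff (t + 2)
    · refine ⟨t + 2, fun k hk => ?_, hhigh⟩
      rcases hcases k with hk | rfl | rfl | hk
      exacts [hlow k hk, h1, h2, absurd hk (by omega)]
    · refine ⟨t + 1, fun k hk => ?_, fun k hk => ?_⟩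
      · rcases hcases k with hk | rfl | rfl | hk
        exacts [hlow k hk, h1, absurd hk (by omega), absurd hk (by omega)]
      · rcases hcases k with hk | rfl | rfl | hk
        exacts [absurd hk (by omega), absurd hk (by omega), (not_le.1 h2).le, hhigh k hk]
  · refine ⟨t, hlow, fun k hk => ?_⟩
    rcases hcases k with hk | rfl | rfl | hk
    exacts [absurd hk (by omega), (not_le.1 h1).le, hmid (not_le.1 h1), hhigh k hk]

theorem AtMostOneSignChange.neg {g : ℝ[X]} (hg : AtMostOneSignChange g) :
    AtMostOneSignChange (-g) := by
  rw [AtMostOneSignChange, neg_neg]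
  exact hg.symm

theorem AtMostOneSignChange.quadratic_mul {α β γ : ℝ} (hα : 0 ≤ α) (hβ : 0 ≤ β) (hγ : 0 ≤ γ)
    (hαγ : α * γ ≤ β ^ 2) {g : ℝ[X]} (hg : AtMostOneSignChange g) :
    AtMostOneSignChange ((C α * X ^ 2 + C β * X + C γ) * g) := by
  rw [AtMostOneSignChange, ← mul_neg]
  exact hg.imp (·.quadratic_mul hα hβ hγ hαγ) (·.quadratic_mul hα hβ hγ hαγ)

theorem AtMostOneSignChange.C_mul (c : ℝ) {g : ℝ[X]} (hg : AtMostOneSignChange g) :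
    AtMostOneSignChange (C c * g) := by
  rcases le_or_gt 0 c with hc | hc
  · simpa using hg.quadratic_mul le_rfl le_rfl hc (by simp)
  · simpa using hg.neg.quadratic_mul le_rfl le_rfl (neg_nonneg.2 hc.le) (by simp)

/-- The second condition says that the extreme coefficients of `f` have the same sign, so that
multiplying by `f` keeps the extreme coefficients of `g` of opposite signs. -/
def SignChangePreserving (f : ℝ[X]) : Prop :=
  (∀ g, AtMostOneSignChange g → AtMostOneSignChange (f * g)) ∧ 0 < f.coeff 0 * f.leadingCoeff

theorem SignChangePreserving.mul {f h : ℝ[X]} (hf : SignChangePreserving f)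
    (hh : SignChangePreserving h) : SignChangePreserving (f * h) := by
  refine ⟨fun g hg => mul_assoc f h g ▸ hf.1 _ (hh.1 g hg), ?_⟩
  rw [mul_coeff_zero, leadingCoeff_mul, mul_mul_mul_comm]
  exact mul_pos hf.2 hh.2

theorem signChangePreserving_C {c : ℝ} (hc : c ≠ 0) : SignChangePreserving (C c) :=
  ⟨fun _ hg => hg.C_mul c, by simpa using mul_self_pos.2 hc⟩

theorem signChangePreserving_quadratic {α β γ : ℝ} (hα : 0 < α) (hβ : 0 ≤ β) (hγ : 0 < γ)
    (hαγ : α * γ ≤ β ^ 2) : SignChangePreserving (C α * X ^ 2 + C β * X + C γ) :=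
  ⟨fun _ hg => hg.quadratic_mul hα.le hβ hγ.le hαγ, by
    rw [leadingCoeff_quadratic hα.ne']; simpa using mul_pos hγ hα⟩

theorem signChangePreserving_linear {β γ : ℝ} (h : 0 < β * γ) :
    SignChangePreserving (C β * X + C γ) := by
  wlog hβ : 0 < β generalizing β γ
  · have hβ0 : β ≠ 0 := by rintro rfl; simp at h
    convert (signChangePreserving_C (by norm_num : (-1 : ℝ) ≠ 0)).mul
      (this (β := -β) (γ := -γ) (by linarith) (neg_pos.2 ((not_lt.1 hβ).lt_of_ne hβ0))) using 1
    simp only [map_neg, map_one]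
    ring
  have hγ : 0 < γ := pos_of_mul_pos_right h hβ.le
  refine ⟨fun g hg => ?_, ?_⟩
  · simpa using hg.quadratic_mul le_rfl hβ.le hγ.le (by rw [zero_mul]; positivity)
  · rw [leadingCoeff_linear hβ.ne']
    simpa using mul_pos hγ hβ

theorem signVar_neg (f : ℕ → ℝ) (N : ℕ) : signVar (fun k => -f k) N = signVar f N := by
  simp only [signVar, neg_mul_neg, neg_eq_zero]

theorem signVar_le_one {f : ℕ → ℝ} (hf : NonnegThenNonpos f) (N : ℕ) : signVar f N ≤ 1 := by
  classical
  obtain ⟨t, hpos, hneg⟩ := hf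
  have hshape : ∀ i k, i < k → f i * f k < 0 → 0 < f i ∧ f k < 0 ∧ i ≤ t ∧ t < k := by
    intro i k hik h
    have hit : i ≤ t := by
      by_contra! hit
      nlinarith [hneg i hit, hneg k (by omega)]
    have hi : 0 < f i := lt_of_le_of_ne (hpos i hit) fun hi => by simp [← hi] at h
    have hk : f k < 0 := by nlinarith
    exact ⟨hi, hk, hit, by by_contra! hkt; linarith [hpos k hkt]⟩
  refine Finset.card_le_one.2 ?_
  rintro ⟨i, k⟩ hik ⟨i', k'⟩ hik'
  simp only [Finset.mem_filter, Finset.mem_product, Finset.mem_range] at hik hik'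
  obtain ⟨-, hlt, hmul, hzero⟩ := hik
  obtain ⟨-, hlt', hmul', hzero'⟩ := hik'
  obtain ⟨hi, hk, hit, hkt⟩ := hshape i k hlt hmul
  obtain ⟨hi', hk', hit', hkt'⟩ := hshape i' k' hlt' hmul'
  have hii' : i = i' := by
    rcases lt_trichotomy i i' with h | h | h
    · exact absurd (hzero i' (Finset.mem_Ioo.2 ⟨h, by omega⟩)) hi'.ne'
    · exact h
    · exact absurd (hzero' i (Finset.mem_Ioo.2 ⟨h, by omega⟩)) hi.ne'
  have hkk' : k = k' := by
    rcases lt_trichotomy k k' with h | h | h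
    · exact absurd (hzero' k (Finset.mem_Ioo.2 ⟨by omega, h⟩)) hk.ne
    · exact h
    · exact absurd (hzero k' (Finset.mem_Ioo.2 ⟨by omega, h⟩)) hk'.ne
  rw [hii', hkk']

theorem signVar_pos {f : ℕ → ℝ} {N j : ℕ} (h0 : 0 < f 0) (hjN : j ≤ N) (hj : f j < 0) :
    0 < signVar f N := by
  classical
  have hex : ∃ k, f k < 0 := ⟨j, hj⟩
  -- the first negative coefficient, and the last positive one before it
  set k := Nat.find hex
  set i := Nat.findGreatest (fun i => 0 < f i) k
  have hk : f k < 0 := Nat.find_spec hex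
  have hi : 0 < f i := Nat.findGreatest_spec (P := fun i => 0 < f i) (Nat.zero_le k) h0
  have hik : i < k := lt_of_le_of_ne (Nat.findGreatest_le k) fun h => by
    rw [h] at hi; linarith
  refine Finset.card_pos.2
    ⟨(i, k), Finset.mem_filter.2 ⟨?_, hik, mul_neg_of_pos_of_neg hi hk, fun l hl => ?_⟩⟩
  · have := Nat.find_min' hex hj
    simp only [Finset.mem_product, Finset.mem_range]
    omega
  · obtain ⟨hil, hlk⟩ := Finset.mem_Ioo.1 hl
    exact le_antisymm (not_lt.1 (Nat.findGreatest_is_greatest hil hlk.le))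
      (not_lt.1 (Nat.find_min hex hlk))

theorem signVar_eq_one {f : ℕ → ℝ} {N j : ℕ} (hf : NonnegThenNonpos f) (h0 : 0 < f 0)
    (hjN : j ≤ N) (hj : f j < 0) : signVar f N = 1 :=
  le_antisymm (signVar_le_one hf N) (signVar_pos h0 hjN hj)

theorem signVar_coeff_eq_one {g : ℝ[X]} {N : ℕ} (hg : AtMostOneSignChange g)
    (hend : g.coeff 0 * g.leadingCoeff < 0) (hN : g.natDegree ≤ N) :
    signVar (fun i => g.coeff i) N = 1 := by
  have key : ∀ g : ℝ[X], NonnegThenNonpos g.coeff → g.coeff 0 * g.leadingCoeff < 0 →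
      g.natDegree ≤ N → signVar g.coeff N = 1 := by
    intro g hg hend hN
    have h0 : 0 < g.coeff 0 := by
      obtain ⟨t, hpos, -⟩ := hg
      exact lt_of_le_of_ne (hpos 0 (Nat.zero_le t)) fun h => by simp [← h] at hend
    exact signVar_eq_one hg h0 hN (by nlinarith [coeff_natDegree (p := g)])
  rcases hg with hg | hg
  · exact key g hg hend hN
  · rw [← signVar_neg]
    convert key (-g) hg (by simpa using hend) (by simpa using hN) using 2
    exact funext fun k => (coeff_neg g k).symm

/-- For `w = s + i t` and `D = (s - a) (s - b) + t²`, the preimage `x = (b - w) / (w - a)` of `w`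
under `x ↦ (a x + b) / (x + 1)` has real part `-D / |w - a|²` and imaginary part
`-(b - a) t / |w - a|²`. The condition says that `x` lies in the closed sector `|arg x| ≥ 2π/3`,
i.e. that `w` lies outside Obreshkoff's two-circle region of `(a, b)`. -/
def NotInTwoCircleRegion (a b : ℝ) (w : ℂ) : Prop :=
  0 < (w.re - a) * (w.re - b) + w.im ^ 2 ∧
    (b - a) ^ 2 * w.im ^ 2 ≤ 3 * ((w.re - a) * (w.re - b) + w.im ^ 2) ^ 2

theorem notInTwoCircleRegion_of_lt_norm_sub {a b z : ℝ} (hz : z ∈ Set.Ioo a b) {w : ℂ}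
    (hw : 2 * (b - a) < ‖(z : ℂ) - w‖) : NotInTwoCircleRegion a b w := by
  obtain ⟨hza, hzb⟩ := hz
  set s := w.re
  set t := w.im
  have hdist : (2 * (b - a)) ^ 2 < (z - s) ^ 2 + t ^ 2 := by
    have hsq : ‖(z : ℂ) - w‖ ^ 2 = (z - s) ^ 2 + t ^ 2 := by
      rw [Complex.sq_norm, Complex.normSq_apply]
      simp only [Complex.sub_re, Complex.sub_im, Complex.ofReal_re, Complex.ofReal_im, s, t]
      ring
    rw [← hsq]
    exact pow_lt_pow_left₀ hw (by linarith) two_ne_zero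
  have key : t ^ 2 + (b - a) ^ 2 ≤ 2 * ((s - a) * (s - b) + t ^ 2) := by
    nlinarith [sq_nonneg (s + z - a - b), mul_pos (sub_pos.2 hza) (sub_pos.2 hzb)]
  refine ⟨by nlinarith [sq_nonneg t, sq_nonneg (b - a)], ?_⟩
  have hsq : (t ^ 2 + (b - a) ^ 2) ^ 2 ≤ (2 * ((s - a) * (s - b) + t ^ 2)) ^ 2 :=
    pow_le_pow_left₀ (by positivity) key 2
  nlinarith [sq_nonneg (t ^ 2 - (b - a) ^ 2)]

section Factors

variable {a b : ℝ}

theorem signChangePreserving_mobius_of_natDegree_eq_one {p : ℝ[X]} (hp : p.natDegree = 1)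
    (hroots : ∀ w : ℂ, aeval w p = 0 → NotInTwoCircleRegion a b w) :
    SignChangePreserving (mobius p 1 a b) := by
  have hc : p.coeff 1 ≠ 0 := by
    simpa [← hp] using leadingCoeff_ne_zero.2 (ne_zero_of_natDegree_gt (hp ▸ one_pos))
  set r := -p.coeff 0 / p.coeff 1
  have hp' : p = C (p.coeff 1) * (X - C r) := by
    conv_lhs => rw [eq_X_add_C_of_natDegree_le_one hp.le]
    simp only [r, mul_sub, ← C_mul]
    field_simp
    simp
  have hr := (hroots r (by rw [hp']; simp)).1
  rw [hp', mobius_C_mul, mobius_X_sub_C]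
  simp only [Complex.ofReal_re, Complex.ofReal_im] at hr
  exact (signChangePreserving_C hc).mul (signChangePreserving_linear (by nlinarith))

theorem signChangePreserving_mobius_of_natDegree_eq_two {p : ℝ[X]} (hp : p.natDegree = 2)
    (hreal : ∀ x : ℝ, ¬ p.IsRoot x)
    (hroots : ∀ w : ℂ, aeval w p = 0 → NotInTwoCircleRegion a b w) :
    SignChangePreserving (mobius p 2 a b) := by
  have hp0 : p ≠ 0 := ne_zero_of_natDegree_gt (hp ▸ two_pos)
  have hc2 : p.coeff 2 ≠ 0 := by simpa [← hp] using leadingCoeff_ne_zero.2 hp0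
  obtain ⟨w, hw⟩ := IsAlgClosed.exists_aeval_eq_zero ℂ p (by simp [degree_eq_natDegree hp0, hp])
  obtain ⟨hD, hsector⟩ := hroots w hw
  rw [aeval_eq_sum_range, hp] at hw
  simp only [sum_range_succ, sum_range_zero, Complex.ext_iff] at hw
  simp only [zero_add, pow_zero, pow_one, sq, Complex.real_smul, Complex.add_re, Complex.add_im,
    Complex.mul_re, Complex.mul_im, Complex.ofReal_re, Complex.ofReal_im, Complex.zero_re,
    Complex.zero_im, mul_one, zero_mul, sub_zero, add_zero] at hw
  obtain ⟨hre, him⟩ := hw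
  set s := w.re
  set t := w.im
  have ht : t ≠ 0 := fun ht => hreal s <| by
    rw [IsRoot, eval_eq_sum_range, hp]
    simp only [sum_range_succ, sum_range_zero, ht] at hre ⊢
    linear_combination hre
  have h1 : p.coeff 1 = -2 * s * p.coeff 2 := by
    apply mul_left_cancel₀ ht
    linear_combination him
  have h0 : p.coeff 0 = (s ^ 2 + t ^ 2) * p.coeff 2 := by
    linear_combination hre - s * h1
  have hmob : mobius p 2 a b = C (p.coeff 2) * (C ((a - s) ^ 2 + t ^ 2) * X ^ 2 +
      C (2 * ((s - a) * (s - b) + t ^ 2)) * X + C ((b - s) ^ 2 + t ^ 2)) := by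
    rw [mobius_two_eq, h1, h0]
    simp only [map_add, map_mul, map_sub, map_pow, map_neg, map_ofNat]
    ring
  have ht2 : 0 < t ^ 2 := by positivity
  rw [hmob]
  refine (signChangePreserving_C hc2).mul
    (signChangePreserving_quadratic (by positivity) (by positivity) (by positivity) ?_)
  nlinarith

theorem signChangePreserving_mobius_of_irreducible {p : ℝ[X]} (hp : Irreducible p)
    (hroots : ∀ w : ℂ, aeval w p = 0 → NotInTwoCircleRegion a b w) :
    SignChangePreserving (mobius p p.natDegree a b) := by
  have hpos := hp.natDegree_pos
  have hle := hp.natDegree_le_two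
  obtain h | h : p.natDegree = 1 ∨ p.natDegree = 2 := by omega
  · rw [h]
    exact signChangePreserving_mobius_of_natDegree_eq_one h hroots
  · rw [h]
    refine signChangePreserving_mobius_of_natDegree_eq_two h (fun x hx => ?_) hroots
    have := degree_eq_one_of_irreducible_of_root hp hx
    rw [degree_eq_natDegree hp.ne_zero, h] at this
    exact absurd this (by decide)

theorem signChangePreserving_mobius (Q : ℝ[X])
    (hroots : ∀ w : ℂ, aeval w Q = 0 → NotInTwoCircleRegion a b w) :
    SignChangePreserving (mobius Q Q.natDegree a b) := by
  induction Q using WfDvdMonoid.induction_on_irreducible with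
  | zero => simpa [NotInTwoCircleRegion] using hroots a
  | unit u hu =>
    obtain ⟨c, hc, rfl⟩ := Polynomial.isUnit_iff.1 hu
    rw [natDegree_C, mobius_C]
    exact signChangePreserving_C hc.ne_zero
  | mul Q p hQ hp ih =>
    rw [natDegree_mul hp.ne_zero hQ, mobius_mul a b le_rfl le_rfl]
    exact (signChangePreserving_mobius_of_irreducible hp fun w hw => hroots w (by simp [hw])).mul
      (ih fun w hw => hroots w (by simp [hw]))

end Factors

theorem signVar_linear_mul_eq_one {β γ : ℝ} (hβ : β < 0) (hγ : 0 < γ) {F : ℝ[X]}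
    (hF : SignChangePreserving F) {N : ℕ} (hN : ((C β * X + C γ) * F).natDegree ≤ N) :
    signVar (fun i => ((C β * X + C γ) * F).coeff i) N = 1 := by
  have hlin : NonnegThenNonpos (C β * X + C γ).coeff := by
    refine ⟨0, fun k hk => ?_, fun k hk => ?_⟩
    · obtain rfl : k = 0 := by omega
      simpa using hγ.le
    · obtain rfl | hk : k = 1 ∨ 1 < k := by omega
      · simpa using hβ.le
      · rw [coeff_eq_zero_of_natDegree_lt (natDegree_linear_le.trans_lt hk)]
  refine signVar_coeff_eq_one (mul_comm F _ ▸ hF.1 _ (Or.inl hlin)) ?_ hN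
  rw [mul_coeff_zero, leadingCoeff_mul, mul_mul_mul_comm, leadingCoeff_linear hβ.ne]
  exact mul_neg_of_neg_of_pos (by simpa using mul_neg_of_pos_of_neg hγ hβ) hF.2

theorem stmt14_general (P : Polynomial ℝ) (n : ℕ) (hdeg : P.natDegree = n) (hsq : Squarefree P)
    (a b : ℝ) (z : ℝ) (hroot : P.eval z = 0)
    (hz : |z - (a+b)/2| < (b-a)/2)
    (hsep : ∀ w : ℂ, (Polynomial.aeval w) P = 0 → w ≠ (z : ℂ) →
      2*(b-a) < ‖(z : ℂ) - w‖) :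
    var P n a b = 1 := by
  have hzI : z ∈ Set.Ioo a b := by
    constructor <;> linarith [abs_lt.1 hz]
  obtain ⟨Q, rfl⟩ := dvd_iff_isRoot.2 hroot
  have hQ : Q ≠ 0 := by rintro rfl; simp at hsq
  have hQz : ¬ Q.IsRoot z := fun h =>
    not_isUnit_X_sub_C z (hsq _ (mul_dvd_mul_left _ (dvd_iff_isRoot.2 h)))
  have hQroots (w : ℂ) (hw : aeval w Q = 0) : NotInTwoCircleRegion a b w := by
    refine notInTwoCircleRegion_of_lt_norm_sub hzI (hsep w (by simp [hw]) ?_)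
    rintro rfl
    rw [← Complex.coe_algebraMap, aeval_algebraMap_apply_eq_algebraMap_eval,
      Complex.coe_algebraMap, Complex.ofReal_eq_zero] at hw
    exact hQz hw
  have hmob : mobius ((X - C z) * Q) n a b =
      (C (a - z) * X + C (b - z)) * mobius Q Q.natDegree a b := by
    rw [← hdeg, natDegree_mul (X_sub_C_ne_zero z) hQ, natDegree_X_sub_C,
      mobius_mul a b (natDegree_X_sub_C z).le le_rfl, mobius_X_sub_C]
  rw [var, hmob]
  exact signVar_linear_mul_eq_one (by linarith [hzI.1]) (by linarith [hzI.2])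
    (signChangePreserving_mobius Q hQroots) (hmob ▸ natDegree_mobius_le a b _ n)

/-- if the one-circle region of I = (a,b) contains a real root z of a
    square-free polynomial P with separation σ(z,P) > 2(b-a), then var(P,I) = 1. -/
theorem stmt14 (P : Polynomial ℝ) (n : ℕ) (hdeg : P.natDegree = n) (hsq : Squarefree P)
    (a b : ℝ) (hab : a < b) (z : ℝ) (hroot : P.eval z = 0)
    (hz : |z - (a+b)/2| < (b-a)/2)
    (hsep : ∀ w : ℂ, (Polynomial.aeval w) P = 0 → w ≠ (z : ℂ) →
      2*(b-a) < ‖(z : ℂ) - w‖) :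
    var P n a b = 1 :=
  stmt14_general P n hdeg hsq a b z hroot hz hsep
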